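/- Assume the gain-ratio condition K_d^gsc / K_θ^gsc = K_d^msc / K_θ^msc. Along every solution x(t) = (ρ₁, ρ₂, ω₁, ω₂, v, P)(t) of the linearized closed-loop wind-turbine/grid model, the LaSalle function V satisfies, for all t ≥ 0, d/dt V(x(t)) = −(K_d^gsc/(K_θ^gsc C_dc)) (b_g ρ₁(t) + b_msc ρ₂(t))² − (κ/K_θ^msc) ω₂(t)² − (1/(K_θ^gsc k_g)) P(t)². In particular, if κ ≥ 0 then t ↦ V(x(t)) is nonincreasing. -/

import Mathlib

/-!
`V` is a weighted sum of squares, so along a trajectory `dV/dt = Σ wᵢ xᵢ ẋᵢ`. The weights are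
chosen so that the couplings `ρ ↔ ω`, `ρ ↔ v` and `ω₁ ↔ P` enter this sum antisymmetrically and
cancel; the gain-ratio condition merges the two DC-link damping terms into the single square
`(b_g ρ₁ + b_msc ρ₂)²`. What remains is a sum of nonpositive terms once `κ ≥ 0`.
-/

/-- A solution of the linearized closed-loop wind-turbine/grid model with state
`x = (ρ₁, ρ₂, ω₁, ω₂, v, P)` (indices `0,…,5`). -/
def IsSolution (Kdg Kdm Kθg Kθm bg bmsc Jg Jwt ω0 ωdel Cdc Tg kg κ : ℝ)
    (x : ℝ → EuclideanSpace ℝ (Fin 6)) : Prop :=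
  ∀ t : ℝ, 0 ≤ t →
    HasDerivAt (fun s => x s 0)
      (-(Kdg / Cdc) * (bg * x t 0 + bmsc * x t 1) - x t 2 + Kθg * x t 4) t ∧
    HasDerivAt (fun s => x s 1)
      (-(Kdm / Cdc) * (bg * x t 0 + bmsc * x t 1) - x t 3 + Kθm * x t 4) t ∧
    HasDerivAt (fun s => x s 2) ((bg * x t 0 + x t 5) / (Jg * ω0)) t ∧
    HasDerivAt (fun s => x s 3) ((bmsc * x t 1 - κ * x t 3) / (Jwt * ωdel)) t ∧
    HasDerivAt (fun s => x s 4) (-(bg * x t 0 + bmsc * x t 1) / Cdc) t ∧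
    HasDerivAt (fun s => x s 5) ((-kg * x t 2 - x t 5) / Tg) t

/-- The LaSalle function `V`. -/
noncomputable def lasalleV (Kθg Kθm bg bmsc Jg Jwt ω0 ωdel Cdc Tg kg : ℝ)
    (x : EuclideanSpace ℝ (Fin 6)) : ℝ :=
  (1 / 2) * ((bg / Kθg) * (x 0) ^ 2 + (bmsc / Kθm) * (x 1) ^ 2 +
    (Jg * ω0 / Kθg) * (x 2) ^ 2 + (Jwt * ωdel / Kθm) * (x 3) ^ 2 +
    Cdc * (x 4) ^ 2 + (Tg / (Kθg * kg)) * (x 5) ^ 2)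

theorem HasDerivAt.half_weighted_sum_sq {ι : Type*} (u : Finset ι) (w : ι → ℝ)
    {f : ι → ℝ → ℝ} {f' : ι → ℝ} {t : ℝ} (hf : ∀ i ∈ u, HasDerivAt (f i) (f' i) t) :
    HasDerivAt (fun s => 1 / 2 * ∑ i ∈ u, w i * f i s ^ 2) (∑ i ∈ u, w i * f i t * f' i) t := by
  have hsum : HasDerivAt (fun s => ∑ i ∈ u, w i * f i s ^ 2)
      (∑ i ∈ u, w i * (2 * f i t * f' i)) t :=
    HasDerivAt.fun_sum fun i hi => by simpa using ((hf i hi).pow 2).const_mul (w i)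
  refine (hsum.const_mul (1 / 2)).congr_deriv ?_
  rw [Finset.mul_sum]
  exact Finset.sum_congr rfl fun i _ => by ring

theorem antitoneOn_of_forall_hasDerivAt_nonpos {D : Set ℝ} (hD : Convex ℝ D) {f f' : ℝ → ℝ}
    (hf : ∀ x ∈ D, HasDerivAt f (f' x) x) (hf'₀ : ∀ x ∈ D, f' x ≤ 0) : AntitoneOn f D :=
  antitoneOn_of_hasDerivWithinAt_nonpos hD
    (fun x hx => (hf x hx).continuousAt.continuousWithinAt)
    (fun x hx => (hf x (interior_subset hx)).hasDerivWithinAt)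
    (fun x hx => hf'₀ x (interior_subset hx))

section LaSalle

variable {bg bmsc Jg Jwt ω0 ωdel Cdc Tg kg Kθg Kθm Kdg Kdm κ : ℝ}

theorem lasalleV_eq_half_weighted_sum_sq (y : EuclideanSpace ℝ (Fin 6)) :
    lasalleV Kθg Kθm bg bmsc Jg Jwt ω0 ωdel Cdc Tg kg y =
      1 / 2 * ∑ i, ![bg / Kθg, bmsc / Kθm, Jg * ω0 / Kθg, Jwt * ωdel / Kθm, Cdc,
        Tg / (Kθg * kg)] i * y i ^ 2 := by
  simp [lasalleV, Fin.sum_univ_six]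

theorem lasalleV_power_balance (hratio : Kdg / Kθg = Kdm / Kθm) (hKθg : Kθg ≠ 0)
    (hKθm : Kθm ≠ 0) (hJg : Jg ≠ 0) (hω0 : ω0 ≠ 0) (hJwt : Jwt ≠ 0) (hωdel : ωdel ≠ 0)
    (hCdc : Cdc ≠ 0) (hTg : Tg ≠ 0) (hkg : kg ≠ 0) (ρ₁ ρ₂ ω₁ ω₂ v P : ℝ) :
    bg / Kθg * ρ₁ * (-(Kdg / Cdc) * (bg * ρ₁ + bmsc * ρ₂) - ω₁ + Kθg * v) +
      bmsc / Kθm * ρ₂ * (-(Kdm / Cdc) * (bg * ρ₁ + bmsc * ρ₂) - ω₂ + Kθm * v) +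
      Jg * ω0 / Kθg * ω₁ * ((bg * ρ₁ + P) / (Jg * ω0)) +
      Jwt * ωdel / Kθm * ω₂ * ((bmsc * ρ₂ - κ * ω₂) / (Jwt * ωdel)) +
      Cdc * v * (-(bg * ρ₁ + bmsc * ρ₂) / Cdc) +
      Tg / (Kθg * kg) * P * ((-kg * ω₁ - P) / Tg) =
    -(Kdg / (Kθg * Cdc)) * (bg * ρ₁ + bmsc * ρ₂) ^ 2 - (κ / Kθm) * ω₂ ^ 2 -
      (1 / (Kθg * kg)) * P ^ 2 := by
  have hKdm : Kdm = Kdg * Kθm / Kθg := by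
    rw [div_eq_div_iff hKθg hKθm] at hratio
    field_simp
    linarith
  subst hKdm
  field_simp
  ring

theorem IsSolution.hasDerivAt_lasalleV (hratio : Kdg / Kθg = Kdm / Kθm) (hKθg : Kθg ≠ 0)
    (hKθm : Kθm ≠ 0) (hJg : Jg ≠ 0) (hω0 : ω0 ≠ 0) (hJwt : Jwt ≠ 0) (hωdel : ωdel ≠ 0)
    (hCdc : Cdc ≠ 0) (hTg : Tg ≠ 0) (hkg : kg ≠ 0) {x : ℝ → EuclideanSpace ℝ (Fin 6)}
    (hx : IsSolution Kdg Kdm Kθg Kθm bg bmsc Jg Jwt ω0 ωdel Cdc Tg kg κ x) {t : ℝ}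
    (ht : 0 ≤ t) :
    HasDerivAt (fun s => lasalleV Kθg Kθm bg bmsc Jg Jwt ω0 ωdel Cdc Tg kg (x s))
      (-(Kdg / (Kθg * Cdc)) * (bg * x t 0 + bmsc * x t 1) ^ 2 - (κ / Kθm) * (x t 3) ^ 2 -
        (1 / (Kθg * kg)) * (x t 5) ^ 2) t := by
  obtain ⟨h0, h1, h2, h3, h4, h5⟩ := hx t ht
  have hcoord : ∀ i ∈ Finset.univ, HasDerivAt (fun s => x s i)
      (![-(Kdg / Cdc) * (bg * x t 0 + bmsc * x t 1) - x t 2 + Kθg * x t 4,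
        -(Kdm / Cdc) * (bg * x t 0 + bmsc * x t 1) - x t 3 + Kθm * x t 4,
        (bg * x t 0 + x t 5) / (Jg * ω0), (bmsc * x t 1 - κ * x t 3) / (Jwt * ωdel),
        -(bg * x t 0 + bmsc * x t 1) / Cdc, (-kg * x t 2 - x t 5) / Tg] i) t := by
    simp only [Finset.mem_univ, forall_true_left, Fin.forall_fin_succ]
    exact ⟨h0, h1, h2, h3, h4, h5, fun i => i.elim0⟩
  simp only [lasalleV_eq_half_weighted_sum_sq]
  convert HasDerivAt.half_weighted_sum_sq _ _ hcoord using 1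
  simp only [Fin.sum_univ_six]
  exact (lasalleV_power_balance hratio hKθg hKθm hJg hω0 hJwt hωdel hCdc hTg hkg ..).symm

theorem lasalle_dissipation_nonpos (hKdg : 0 ≤ Kdg) (hKθg : 0 < Kθg) (hKθm : 0 < Kθm)
    (hCdc : 0 < Cdc) (hkg : 0 < kg) (hκ : 0 ≤ κ) (σ ω₂ P : ℝ) :
    -(Kdg / (Kθg * Cdc)) * σ ^ 2 - (κ / Kθm) * ω₂ ^ 2 - (1 / (Kθg * kg)) * P ^ 2 ≤ 0 := by
  have hσ : 0 ≤ Kdg / (Kθg * Cdc) * σ ^ 2 := by positivity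
  have hω₂ : 0 ≤ κ / Kθm * ω₂ ^ 2 := by positivity
  have hP : 0 ≤ 1 / (Kθg * kg) * P ^ 2 := by positivity
  linarith

end LaSalle

theorem lasalleV_dissipation_general
    (bg bmsc Jg Jwt ω0 ωdel Cdc Tg kg Kθg Kθm Kdg Kdm Kωr Kβ Kp : ℝ)
    (hJg : 0 < Jg) (hJwt : 0 < Jwt)
    (hω0 : 0 < ω0) (hωdel : 0 < ωdel) (hCdc : 0 < Cdc) (hTg : 0 < Tg)
    (hkg : 0 < kg) (hKθg : 0 < Kθg) (hKθm : 0 < Kθm)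
    (hKdg : 0 < Kdg)
    (hratio : Kdg / Kθg = Kdm / Kθm)
    (x : ℝ → EuclideanSpace ℝ (Fin 6))
    (hx : IsSolution Kdg Kdm Kθg Kθm bg bmsc Jg Jwt ω0 ωdel Cdc Tg kg
      (Kωr + Kβ * Kp) x) :
    (∀ t : ℝ, 0 ≤ t →
      HasDerivAt (fun s => lasalleV Kθg Kθm bg bmsc Jg Jwt ω0 ωdel Cdc Tg kg (x s))
        (-(Kdg / (Kθg * Cdc)) * (bg * x t 0 + bmsc * x t 1) ^ 2 -
          ((Kωr + Kβ * Kp) / Kθm) * (x t 3) ^ 2 -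
          (1 / (Kθg * kg)) * (x t 5) ^ 2) t) ∧
    (0 ≤ Kωr + Kβ * Kp →
      AntitoneOn (fun t => lasalleV Kθg Kθm bg bmsc Jg Jwt ω0 ωdel Cdc Tg kg (x t))
        (Set.Ici (0 : ℝ))) := by
  have hderiv := fun t (ht : 0 ≤ t) =>
    hx.hasDerivAt_lasalleV hratio hKθg.ne' hKθm.ne' hJg.ne' hω0.ne' hJwt.ne' hωdel.ne'
      hCdc.ne' hTg.ne' hkg.ne' ht
  refine ⟨hderiv, fun hκ => ?_⟩
  exact antitoneOn_of_forall_hasDerivAt_nonpos (convex_Ici 0) hderiv fun t _ =>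
    lasalle_dissipation_nonpos hKdg.le hKθg hKθm hCdc hkg hκ _ _ _

/-- **LaSalle dissipation identity.** Under the gain-ratio condition
`K_d^gsc / K_θ^gsc = K_d^msc / K_θ^msc`, along every solution of the linearized
model the LaSalle function satisfies
`d/dt V(x(t)) = −(K_d^gsc/(K_θ^gsc C_dc)) (b_g ρ₁ + b_msc ρ₂)² − (κ/K_θ^msc) ω₂² −
(1/(K_θ^gsc k_g)) P²`; in particular, if `κ ≥ 0` then `t ↦ V(x(t))` is
nonincreasing on `[0, ∞)`. -/
theorem lasalleV_dissipation
    (bg bmsc Jg Jwt ω0 ωdel Cdc Tg kg Kθg Kθm Kdg Kdm Kωr Kβ Kp : ℝ)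
    (hbg : 0 < bg) (hbmsc : 0 < bmsc) (hJg : 0 < Jg) (hJwt : 0 < Jwt)
    (hω0 : 0 < ω0) (hωdel : 0 < ωdel) (hCdc : 0 < Cdc) (hTg : 0 < Tg)
    (hkg : 0 < kg) (hKθg : 0 < Kθg) (hKθm : 0 < Kθm)
    (hKdg : 0 < Kdg) (hKdm : 0 < Kdm)
    (hratio : Kdg / Kθg = Kdm / Kθm)
    (x : ℝ → EuclideanSpace ℝ (Fin 6))
    (hx : IsSolution Kdg Kdm Kθg Kθm bg bmsc Jg Jwt ω0 ωdel Cdc Tg kg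
      (Kωr + Kβ * Kp) x) :
    (∀ t : ℝ, 0 ≤ t →
      HasDerivAt (fun s => lasalleV Kθg Kθm bg bmsc Jg Jwt ω0 ωdel Cdc Tg kg (x s))
        (-(Kdg / (Kθg * Cdc)) * (bg * x t 0 + bmsc * x t 1) ^ 2 -
          ((Kωr + Kβ * Kp) / Kθm) * (x t 3) ^ 2 -
          (1 / (Kθg * kg)) * (x t 5) ^ 2) t) ∧
    (0 ≤ Kωr + Kβ * Kp →
      AntitoneOn (fun t => lasalleV Kθg Kθm bg bmsc Jg Jwt ω0 ωdel Cdc Tg kg (x t))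
        (Set.Ici (0 : ℝ))) :=
  lasalleV_dissipation_general bg bmsc Jg Jwt ω0 ωdel Cdc Tg kg Kθg Kθm Kdg Kdm Kωr Kβ Kp hJg hJwt
    hω0 hωdel hCdc hTg hkg hKθg hKθm hKdg hratio x hx
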